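/- arXiv:2003.10480 — 3 statements merged into one kernel-verified Lean document; each statement's English description precedes it below -/
import Mathlib

section
/- In the Cattown CP-net over variables {C, D, F, W} (ignoring B), in the induced preorder generated by the flips, the outcomes with d = false, f = false are maximal, and the two such outcomes differing only in c are equivalent. -/
inductive CatVar : Type
  | C | D | F | W
  deriving DecidableEq

instance : Fintype CatVar :=
  ⟨{CatVar.C, CatVar.D, CatVar.F, CatVar.W}, fun x => by cases x <;> simp⟩

open CatVar

/-- Flip relation of the Cattown CP-net over {C,D,F,W} (worse, better). -/
def catR (o u : CatVar → Bool) : Prop :=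
  -- indifference on C (both directions)
  (∀ x, x ≠ C → o x = u x) ∨
  -- no dog preferred to dog
  ((∀ x, x ≠ D → o x = u x) ∧ o D = true ∧ u D = false) ∨
  -- given ¬d: no fence preferred to fence
  ((∀ x, x ≠ F → o x = u x) ∧ o D = false ∧ o F = true ∧ u F = false) ∨
  -- given d: fence preferred to no fence
  ((∀ x, x ≠ F → o x = u x) ∧ o D = true ∧ o F = false ∧ u F = true) ∨
  -- given f: white preferred to non-white
  ((∀ x, x ≠ W → o x = u x) ∧ o F = true ∧ o W = false ∧ u W = true) ∨
  -- given ¬f: indifference on W (both directions)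
  ((∀ x, x ≠ W → o x = u x) ∧ o F = false)

def catLe : (CatVar → Bool) → (CatVar → Bool) → Prop := Relation.ReflTransGen catR

def catLt (o u : CatVar → Bool) : Prop := catLe o u ∧ ¬ catLe u o

lemma flip_closed (o u : CatVar → Bool) (h : catR o u) (hd : o D = false)
    (hf : o F = false) : u D = false ∧ u F = false ∧ catR u o := by
  rcases h with h | ⟨h, h2, _⟩ | ⟨_, _, h3, _⟩ | ⟨_, h2, _⟩ | ⟨_, h2, _⟩ | ⟨h, _⟩
  · refine ⟨(h D (by simp)) ▸ hd, (h F (by simp)) ▸ hf,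
      Or.inl fun x hx => (h x hx).symm⟩
  · rw [hd] at h2; exact absurd h2 (by simp)
  · rw [hf] at h3; exact absurd h3 (by simp)
  · rw [hd] at h2; exact absurd h2 (by simp)
  · rw [hf] at h2; exact absurd h2 (by simp)
  · have hd' : u D = false := (h D (by simp)) ▸ hd
    have hf' : u F = false := (h F (by simp)) ▸ hf
    exact ⟨hd', hf',
      Or.inr (Or.inr (Or.inr (Or.inr (Or.inr
        ⟨fun x hx => (h x hx).symm, hf'⟩))))⟩

lemma le_closed (o u : CatVar → Bool) (h : catLe o u) (hd : o D = false)
    (hf : o F = false) : u D = false ∧ u F = false ∧ catLe u o := by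
  induction h with
  | refl => exact ⟨hd, hf, Relation.ReflTransGen.refl⟩
  | tail _ hbu ih =>
    obtain ⟨hbd, hbf, hbo⟩ := ih
    obtain ⟨hud, huf, hub⟩ := flip_closed _ _ hbu hbd hbf
    exact ⟨hud, huf, (Relation.ReflTransGen.single hub).trans hbo⟩

/-- Outcomes with no dog and no fence are maximal, and the two such outcomes
differing only at C are equivalent. -/
theorem cattown_top :
    (∀ o : CatVar → Bool, o D = false → o F = false → ∀ u, ¬ catLt o u) ∧
    (∀ o1 o2 : CatVar → Bool, o1 D = false → o1 F = false →
      (∀ x, x ≠ C → o1 x = o2 x) → catLe o1 o2 ∧ catLe o2 o1) := by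
  constructor
  · intro o hd hf u ⟨hle, hnle⟩
    exact hnle (le_closed o u hle hd hf).2.2
  · intro o1 o2 _ _ h
    exact ⟨Relation.ReflTransGen.single (Or.inl h),
      Relation.ReflTransGen.single (Or.inl fun x hx => (h x hx).symm)⟩
end

section
/- In the Cattown CP-net preorder restricted to variables {D, F}, the outcome (d, f) with a dog and a fence is strictly better than (d, ¬f) with a dog and no fence, even though both are strictly worse than (¬d, ¬f): compliance with a contrary-to-duty obligation yields an intermediate level of the order. -/
/-- Cattown flips on outcomes in `Bool × Bool` (first component D for dog,
second F for fence), as pairs (worse, better). -/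
def dfR : Bool × Bool → Bool × Bool → Prop := fun o u =>
  -- prefer no dog, ceteris paribus
  (o.1 = true ∧ u.1 = false ∧ o.2 = u.2) ∨
  -- if dog then fence preferred
  (o = (true, false) ∧ u = (true, true)) ∨
  -- if no dog then no fence preferred
  (o = (false, true) ∧ u = (false, false))

def dfLe : Bool × Bool → Bool × Bool → Prop := Relation.ReflTransGen dfR

def dfLt (o u : Bool × Bool) : Prop := dfLe o u ∧ ¬ dfLe u o

def dfRank : Bool × Bool → Nat
  | (true, false) => 0
  | (true, true) => 1
  | (false, true) => 2
  | (false, false) => 3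

lemma dfR_rank {o u : Bool × Bool} (h : dfR o u) : dfRank o < dfRank u := by
  rcases o with ⟨a, b⟩; rcases u with ⟨c, d⟩
  rcases a <;> rcases b <;> rcases c <;> rcases d <;> simp [dfR, dfRank] at h ⊢

lemma dfLe_rank {o u : Bool × Bool} (h : dfLe o u) : dfRank o ≤ dfRank u := by
  induction h with
  | refl => exact le_refl _
  | tail _ hstep ih => exact le_of_lt (lt_of_le_of_lt ih (dfR_rank hstep))

lemma not_dfLe {o u : Bool × Bool} (h : dfRank u < dfRank o) : ¬ dfLe o u :=
  fun hle => absurd (dfLe_rank hle) (not_le.mpr h)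

/-- Compliance with the contrary-to-duty obligation gives an intermediate
level: `(d,¬f) ≺ (d,f) ≺ (¬d,¬f)` and `(d,¬f) ≺ (¬d,¬f)`. -/
theorem ctd_intermediate_level :
    dfLt (true, false) (true, true) ∧
    dfLt (true, true) (false, false) ∧
    dfLt (true, false) (false, false) := by
  refine ⟨⟨Relation.ReflTransGen.single (Or.inr (Or.inl ⟨rfl, rfl⟩)), not_dfLe (by decide)⟩,
    ⟨Relation.ReflTransGen.tail (b := (false, true)) (Relation.ReflTransGen.single (Or.inl ⟨rfl, rfl, rfl⟩))
      (Or.inr (Or.inr ⟨rfl, rfl⟩)), not_dfLe (by decide)⟩,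
    ⟨Relation.ReflTransGen.single (Or.inl ⟨rfl, rfl, rfl⟩), not_dfLe (by decide)⟩⟩
end

section
/- In the full Cattown CP-net over {B, C, D, F, W} with no preference statements for B, the induced preorder has exactly two weakly connected components, distinguished by the value of B: two outcomes are connected (in the equivalence closure of the flip relation) if and only if they agree on B. -/
inductive TownVar : Type
  | B | C | D | F | W
  deriving DecidableEq

instance : Fintype TownVar :=
  ⟨{TownVar.B, TownVar.C, TownVar.D, TownVar.F, TownVar.W}, fun x => by cases x <;> decide⟩

open TownVar

/-- Flip relation of the full Cattown CP-net over {B,C,D,F,W}: no preference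
statement mentions B, so no flip changes B. -/
def townR (o u : TownVar → Bool) : Prop :=
  -- indifference on C (both directions)
  (∀ x, x ≠ C → o x = u x) ∨
  -- no dog preferred to dog
  ((∀ x, x ≠ D → o x = u x) ∧ o D = true ∧ u D = false) ∨
  -- given ¬d: no fence preferred to fence
  ((∀ x, x ≠ F → o x = u x) ∧ o D = false ∧ o F = true ∧ u F = false) ∨
  -- given d: fence preferred to no fence
  ((∀ x, x ≠ F → o x = u x) ∧ o D = true ∧ o F = false ∧ u F = true) ∨
  -- given f: white preferred to non-white
  ((∀ x, x ≠ W → o x = u x) ∧ o F = true ∧ o W = false ∧ u W = true) ∨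
  -- given ¬f: indifference on W (both directions)
  ((∀ x, x ≠ W → o x = u x) ∧ o F = false)

/-! Every flip fixes `B`, so `B` is an invariant of the equivalence closure. Conversely,
from any outcome one can set `D`, then `F`, then `W`, then `C` to `false` by flips (dropping
the dog first makes dropping the fence legal, after which `W` is free), reaching an outcome
determined by the value of `B` alone. -/

namespace Relation

variable {α β : Type*}

theorem EqvGen.apply_eq_of_rel {r : α → α → Prop} {f : α → β}
    (hf : ∀ a b, r a b → f a = f b) {a b : α} (h : EqvGen r a b) : f a = f b :=
  congrArg (Quot.lift f hf) (Quot.eqvGen_sound h)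

theorem eqvGen_update_of_rel {ι : Type*} [DecidableEq ι] {r : (ι → β) → (ι → β) → Prop}
    (v : ι → β) (i : ι) (b : β) (h : v i ≠ b → r v (Function.update v i b)) :
    EqvGen r v (Function.update v i b) := by
  by_cases hb : v i = b
  · rw [Function.update_eq_self_iff.2 hb.symm]
    exact EqvGen.refl v
  · exact EqvGen.rel _ _ (h hb)

end Relation

open Function Relation

theorem townR_apply_B {o u : TownVar → Bool} (h : townR o u) : o B = u B := by
  rcases h with h | ⟨h, -⟩ | ⟨h, -⟩ | ⟨h, -⟩ | ⟨h, -⟩ | ⟨h, -⟩ <;> exact h B (by decide)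

theorem townR_update_C (v : TownVar → Bool) (b : Bool) : townR v (update v C b) :=
  Or.inl fun _ hx => (update_of_ne hx _ _).symm

theorem townR_update_D_false {v : TownVar → Bool} (hD : v D = true) :
    townR v (update v D false) :=
  Or.inr <| Or.inl ⟨fun _ hx => (update_of_ne hx _ _).symm, hD, update_self _ _ _⟩

theorem townR_update_F_false {v : TownVar → Bool} (hD : v D = false) (hF : v F = true) :
    townR v (update v F false) :=
  Or.inr <| Or.inr <| Or.inl ⟨fun _ hx => (update_of_ne hx _ _).symm, hD, hF, update_self _ _ _⟩

theorem townR_update_W {v : TownVar → Bool} (hF : v F = false) (b : Bool) :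
    townR v (update v W b) :=
  Or.inr <| Or.inr <| Or.inr <| Or.inr <| Or.inr ⟨fun _ hx => (update_of_ne hx _ _).symm, hF⟩

def townBase (b : Bool) : TownVar → Bool :=
  update (fun _ => false) B b

theorem eqvGen_townR_townBase (v : TownVar → Bool) : EqvGen townR v (townBase (v B)) := by
  set v₁ := update v D false
  set v₂ := update v₁ F false
  set v₃ := update v₂ W false
  have h₁ : EqvGen townR v v₁ :=
    eqvGen_update_of_rel v D false fun h => townR_update_D_false (by simpa using h)
  have h₂ : EqvGen townR v₁ v₂ :=
    eqvGen_update_of_rel v₁ F false fun h =>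
      townR_update_F_false (by simp [v₁]) (by simpa using h)
  have h₃ : EqvGen townR v₂ v₃ := EqvGen.rel _ _ (townR_update_W (by simp [v₂]) false)
  have h₄ : EqvGen townR v₃ (update v₃ C false) := EqvGen.rel _ _ (townR_update_C v₃ false)
  have hbase : update v₃ C false = townBase (v B) := by
    funext x
    cases x <;> simp [v₁, v₂, v₃, townBase]
  rw [← hbase]
  exact h₁.trans _ _ _ (h₂.trans _ _ _ (h₃.trans _ _ _ h₄))

/-- The induced preorder has exactly two weakly connected components,
distinguished by the value of B: two outcomes are connected in the
equivalence closure of the flip relation iff they agree on B. -/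
theorem cattown_two_components (o u : TownVar → Bool) :
    Relation.EqvGen townR o u ↔ o B = u B := by
  refine ⟨EqvGen.apply_eq_of_rel (f := fun v : TownVar → Bool => v B) fun _ _ => townR_apply_B,
    fun hB => ?_⟩
  have hu := (eqvGen_townR_townBase u).symm
  rw [← hB] at hu
  exact (eqvGen_townR_townBase o).trans _ _ _ hu
end
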